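/- arXiv:2604.21187 — 2 statements merged into one kernel-verified Lean document; each statement's English description precedes it below -/
import Mathlib

section
/- Let t ≥ 4, m = t−2, n = 6m+1, and let G be the circulant graph on ℤ/nℤ with distance set {m} ∪ [2m+1, 3m]. For every edge {u,v} of G, the graph obtained from G by removing this edge contains an independent set of size t = m+2. -/
/-- The cyclic distance ‖x‖ = min(x mod n, n − (x mod n)) for x ∈ ℤ/nℤ. -/
def cyclicDist (n : ℕ) (x : ZMod n) : ℕ := min x.val (n - x.val)

/-- The circulant graph on `ZMod n` with distance set `S`: `x ~ y` iff `‖x - y‖ ∈ S`. -/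
def circ (n : ℕ) (S : Set ℕ) : SimpleGraph (ZMod n) :=
  SimpleGraph.fromRel (fun x y => cyclicDist n (x - y) ∈ S)

/-- `G` is `R(s,t)`-good: no clique of size `s` and no independent set of size `t`. -/
def RGood {V : Type*} (s t : ℕ) (G : SimpleGraph V) : Prop :=
  G.CliqueFree s ∧ Gᶜ.CliqueFree t

/-- `G` is doubly saturated `R(s,t)`-good. -/
def DoublySaturated {V : Type*} (s t : ℕ) (G : SimpleGraph V) : Prop :=
  RGood s t G ∧
  (∀ u v : V, u ≠ v → ¬ G.Adj u v → ¬ (G ⊔ SimpleGraph.edge u v).CliqueFree s) ∧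
  (∀ u v : V, G.Adj u v → ¬ ((G.deleteEdges {s(u, v)})ᶜ.CliqueFree t)) ∧
  G ≠ ⊤ ∧ Gᶜ ≠ ⊤

lemma cyclicDist_neg (n : ℕ) [NeZero n] (x : ZMod n) : cyclicDist n (-x) = cyclicDist n x := by
  rcases eq_or_ne x 0 with rfl | h
  · simp
  · have h1 : x.val < n := ZMod.val_lt x
    have h2 : x.val ≠ 0 := by simpa [ZMod.val_eq_zero] using h
    rw [cyclicDist, cyclicDist, ZMod.neg_val, if_neg h]
    omega

lemma cyclicDist_sub (n : ℕ) (a b : ℕ) (ha : a < n) (hb : b ≤ a) :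
    cyclicDist n ((a : ZMod n) - (b : ZMod n)) = min (a - b) (n - (a - b)) := by
  rw [← Nat.cast_sub hb, cyclicDist, ZMod.val_natCast, Nat.mod_eq_of_lt (by omega)]

lemma build (m n : ℕ) (hn : n = 6*m+1) (u v : ZMod n) (F : Finset ℕ)
    (hcard : F.card = m + 2) (hlt : ∀ x ∈ F, x < n)
    (hall : ∀ x ∈ F, ∀ y ∈ F, y < x → ¬(x = (v-u).val ∧ y = 0) →
        (min (x-y) (n-(x-y)) ≠ m ∧
          ¬(2*m+1 ≤ min (x-y) (n-(x-y)) ∧ min (x-y) (n-(x-y)) ≤ 3*m))) :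
    ¬ (((circ n ({m} ∪ Set.Icc (2*m+1) (3*m))).deleteEdges {s(u, v)})ᶜ.CliqueFree (m+2)) := by
  have hn0 : NeZero n := ⟨by omega⟩
  have hv : u + (((v-u).val : ℕ) : ZMod n) = v := by
    rw [ZMod.natCast_val, ZMod.cast_id]; ring
  intro hcf
  apply hcf (F.image (fun k : ℕ => u + (k : ZMod n)))
  have key : ∀ a ∈ F, ∀ b ∈ F, b < a →
      ¬ ((circ n ({m} ∪ Set.Icc (2*m+1) (3*m))).deleteEdges {s(u, v)}).Adj
        (u + (a : ZMod n)) (u + (b : ZMod n)) := by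
    intro a ha b hb hba hAdj
    rw [SimpleGraph.deleteEdges_adj] at hAdj
    obtain ⟨hadj, hne⟩ := hAdj
    by_cases hsp : a = (v-u).val ∧ b = 0
    · apply hne
      obtain ⟨rfl, rfl⟩ := hsp
      simp only [Nat.cast_zero, add_zero, hv, Set.mem_singleton_iff]
      exact Sym2.eq_swap
    · simp only [circ, SimpleGraph.fromRel_adj] at hadj
      obtain ⟨-, hS⟩ := hadj
      have e1 : (u + (a : ZMod n)) - (u + (b : ZMod n)) = (a : ZMod n) - b := by ring
      have e2 : (u + (b : ZMod n)) - (u + (a : ZMod n)) = -((a : ZMod n) - b) := by ring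
      rw [e1] at hS
      rw [e2, cyclicDist_neg, or_self] at hS
      rw [cyclicDist_sub n a b (hlt a ha) hba.le] at hS
      obtain ⟨h1, h2⟩ := hall a ha b hb hba hsp
      simp only [Set.mem_union, Set.mem_singleton_iff, Set.mem_Icc] at hS
      rcases hS with h | h
      · exact h1 h
      · exact h2 h
  constructor
  · intro x hx y hy hxy
    simp only [Finset.coe_image, Set.mem_image, Finset.mem_coe] at hx hy
    obtain ⟨a, ha, rfl⟩ := hx
    obtain ⟨b, hb, rfl⟩ := hy
    rw [SimpleGraph.compl_adj]
    refine ⟨hxy, ?_⟩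
    have hab : a ≠ b := fun h => hxy (by rw [h])
    rcases lt_or_gt_of_ne hab with h | h
    · intro hA; exact key b hb a ha h hA.symm
    · exact key a ha b hb h
  · rw [Finset.card_image_of_injOn, hcard]
    intro a ha b hb hab
    have h1 : (a : ZMod n) = b := by
      have := hab
      simpa using add_left_cancel this
    have h2 := congrArg ZMod.val h1
    rw [ZMod.val_natCast, ZMod.val_natCast, Nat.mod_eq_of_lt (hlt a ha),
      Nat.mod_eq_of_lt (hlt b hb)] at h2
    exact h2

lemma helper (m n : ℕ) (hm : 2 ≤ m) (hn : n = 6*m+1) (u v : ZMod n)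
    (hD : (v-u).val = m ∨ (2*m+1 ≤ (v-u).val ∧ (v-u).val ≤ 3*m)) :
    ¬ (((circ n ({m} ∪ Set.Icc (2*m+1) (3*m))).deleteEdges {s(u, v)})ᶜ.CliqueFree (m+2)) := by
  set D := (v-u).val with hDdef
  rcases hD with hDm | ⟨h1, h2⟩
  · -- D = m : F = {0, m, m+1} ∪ [5m+2, 6m]
    apply build m n hn u v (insert 0 (insert m (insert (m+1) (Finset.Icc (5*m+2) (6*m)))))
    · rw [Finset.card_insert_of_notMem (by simp only [Finset.mem_insert, Finset.mem_Icc]; omega),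
        Finset.card_insert_of_notMem (by simp only [Finset.mem_insert, Finset.mem_Icc]; omega),
        Finset.card_insert_of_notMem (by simp only [Finset.mem_insert, Finset.mem_Icc]; omega), Nat.card_Icc]
      omega
    · intro x hx
      simp only [Finset.mem_insert, Finset.mem_Icc] at hx
      omega
    · intro x hx y hy hyx hsp
      rw [← hDdef] at hsp
      simp only [Finset.mem_insert, Finset.mem_Icc] at hx hy
      omega
  · rcases eq_or_lt_of_le h2 with hD3 | hDlt
    · -- D = 3m : F = {0, 3m} ∪ [4m+1, 5m]
      apply build m n hn u v (insert 0 (insert (3*m) (Finset.Icc (4*m+1) (5*m))))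
      · rw [Finset.card_insert_of_notMem (by simp only [Finset.mem_insert, Finset.mem_Icc]; omega),
          Finset.card_insert_of_notMem (by simp only [Finset.mem_insert, Finset.mem_Icc]; omega), Nat.card_Icc]
        omega
      · intro x hx
        simp only [Finset.mem_insert, Finset.mem_Icc] at hx
        omega
      · intro x hx y hy hyx hsp
        rw [← hDdef] at hsp
        simp only [Finset.mem_insert, Finset.mem_Icc] at hx hy
        omega
    · -- D = 2m+1+e, e ≤ m-2 : F = {0, D, 2m} ∪ ([e+1, m+e] \ {m})
      set e := D - (2*m+1) with hedef
      have he1 : D = 2*m+1+e := by omega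
      have he2 : e ≤ m - 2 := by omega
      apply build m n hn u v
        (insert 0 (insert D (insert (2*m) (Finset.Icc (e+1) (m+e) \ {m}))))
      · rw [Finset.card_insert_of_notMem
            (by simp only [Finset.mem_insert, Finset.mem_sdiff, Finset.mem_Icc, Finset.mem_singleton]; omega),
          Finset.card_insert_of_notMem
            (by simp only [Finset.mem_insert, Finset.mem_sdiff, Finset.mem_Icc, Finset.mem_singleton]; omega),
          Finset.card_insert_of_notMem
            (by simp only [Finset.mem_insert, Finset.mem_sdiff, Finset.mem_Icc, Finset.mem_singleton]; omega),
          Finset.card_sdiff_of_subset (by rw [Finset.singleton_subset_iff, Finset.mem_Icc]; omega),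
          Nat.card_Icc]
        simp
        omega
      · intro x hx
        simp only [Finset.mem_insert, Finset.mem_sdiff, Finset.mem_Icc,
          Finset.mem_singleton] at hx
        omega
      · intro x hx y hy hyx hsp
        rw [← hDdef] at hsp
        simp only [Finset.mem_insert, Finset.mem_sdiff, Finset.mem_Icc,
          Finset.mem_singleton] at hx hy
        omega

theorem stmt_4 (t m n : ℕ) (ht : 4 ≤ t) (hm : m = t - 2) (hn : n = 6 * m + 1)
    (u v : ZMod n)
    (hadj : (circ n ({m} ∪ Set.Icc (2 * m + 1) (3 * m))).Adj u v) :
    ¬ (((circ n ({m} ∪ Set.Icc (2 * m + 1) (3 * m))).deleteEdges {s(u, v)})ᶜ.CliqueFree (m + 2)) := by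
  have hm2 : 2 ≤ m := by omega
  have hn0 : NeZero n := ⟨by omega⟩
  simp only [circ, SimpleGraph.fromRel_adj] at hadj
  obtain ⟨hne, hS⟩ := hadj
  have hsym : cyclicDist n (u - v) = cyclicDist n (v - u) := by
    rw [← neg_sub v u, cyclicDist_neg]
  have hS' : cyclicDist n (v - u) ∈ ({m} ∪ Set.Icc (2*m+1) (3*m) : Set ℕ) := by
    rcases hS with h | h
    · rwa [hsym] at h
    · exact h
  have hvu : v - u ≠ 0 := fun h => hne (by rw [← sub_eq_zero, ← neg_sub v u, h, neg_zero])
  have hc : (v-u).val < n := ZMod.val_lt _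
  have hc0 : (v-u).val ≠ 0 := by rwa [Ne, ZMod.val_eq_zero]
  rw [cyclicDist] at hS'
  simp only [Set.mem_union, Set.mem_singleton_iff, Set.mem_Icc] at hS'
  by_cases hcase : (v-u).val = m ∨ (2*m+1 ≤ (v-u).val ∧ (v-u).val ≤ 3*m)
  · exact helper m n hm2 hn u v hcase
  · have huv : (u-v).val = n - (v-u).val := by
      rw [← neg_sub v u, ZMod.neg_val, if_neg hvu]
    have hcase2 : (u-v).val = m ∨ (2*m+1 ≤ (u-v).val ∧ (u-v).val ≤ 3*m) := by
      rw [huv]; omega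
    have := helper m n hm2 hn v u hcase2
    rwa [Sym2.eq_swap] at this
end

section
/- The Paley graph of order 13 (equivalently, the circulant graph on 13 vertices with distance set {1,3,4}) is a doubly saturated R(4,4)-good graph. -/
/-!
A circulant graph is invariant under translation, so it has a `4`-clique iff it has one through `0`,
and adding the non-edge `uv` creates a `4`-clique iff adding `0(v - u)` does. Deleting the edge `uv`
from `G` is adding it to `Gᶜ`, and the complement of `circ 13 {1, 3, 4}` is the circulant graph
`circ 13 {2, 5, 6}`; so double saturation of `G` is `K₄`-saturation of two circulant graphs, which is a
finite check at the vertex `0`.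
-/

namespace SimpleGraph

section

variable {V : Type*} {G : SimpleGraph V}

theorem cliqueFree_four_iff :
    G.CliqueFree 4 ↔ ∀ a b c d : V, G.Adj a b → G.Adj a c → G.Adj a d →
      G.Adj b c → G.Adj b d → G.Adj c d → False := by
  classical
  refine ⟨fun h a b c d hab hac had hbc hbd hcd => h {a, b, c, d} ?_, fun h s hs => ?_⟩
  · rw [isNClique_iff, Finset.card_eq_four]
    refine ⟨?_, a, b, c, d, hab.ne, hac.ne, had.ne, hbc.ne, hbd.ne, hcd.ne, rfl⟩
    simp [isClique_insert, hab, hac, had, hbc, hbd, hcd]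
  · obtain ⟨a, b, c, d, hab, hac, had, hbc, hbd, hcd, rfl⟩ := Finset.card_eq_four.1 hs.card_eq
    have := hs.isClique
    simp only [Finset.coe_insert, Finset.coe_singleton, isClique_insert, Set.pairwise_singleton,
      Set.mem_singleton_iff, Set.mem_insert_iff, forall_eq_or_imp, forall_eq, ne_eq, hab, hac, had,
      hbc, hbd, hcd, not_false_eq_true, forall_const, true_and] at this
    exact h a b c d this.2.1 this.2.2.1 this.2.2.2 this.1.2.1 this.1.2.2 this.1.1

theorem not_cliqueFree_four_sup_edge {u v a b : V} (huv : u ≠ v) (hua : G.Adj u a)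
    (hub : G.Adj u b) (hva : G.Adj v a) (hvb : G.Adj v b) (hab : G.Adj a b) :
    ¬(G ⊔ edge u v).CliqueFree 4 := fun h =>
  cliqueFree_four_iff.1 h u v a b (Or.inr ((edge_adj ..).2 ⟨.inl ⟨rfl, rfl⟩, huv⟩))
    (.inl hua) (.inl hub) (.inl hva) (.inl hvb) (.inl hab)

theorem compl_deleteEdges_edge (u v : V) :
    (G.deleteEdges {s(u, v)})ᶜ = Gᶜ ⊔ edge u v := by
  ext x y
  simp only [compl_adj, deleteEdges_adj, sup_adj, edge_adj, Set.mem_singleton_iff, Sym2.eq_iff]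
  grind [G.adj_symm]

def CliqueSaturated (G : SimpleGraph V) (n : ℕ) : Prop :=
  G.CliqueFree n ∧ ∀ u v, u ≠ v → ¬G.Adj u v → ¬(G ⊔ edge u v).CliqueFree n

end

section TranslationInvariant

variable {A : Type*} [AddGroup A] {G : SimpleGraph A}

def TranslationInvariant (G : SimpleGraph A) : Prop :=
  ∀ c x y, G.Adj (x + c) (y + c) ↔ G.Adj x y

theorem TranslationInvariant.adj_sub_iff (hG : G.TranslationInvariant) (u x y : A) :
    G.Adj (x - u) (y - u) ↔ G.Adj x y := by
  simpa only [sub_eq_add_neg] using hG (-u) x y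

theorem TranslationInvariant.cliqueSaturated_four (hG : G.TranslationInvariant)
    (hfree : ∀ b c d, G.Adj 0 b → G.Adj 0 c → G.Adj 0 d → G.Adj b c → G.Adj b d → G.Adj c d →
      False)
    (hsat : ∀ v, v ≠ 0 → ¬G.Adj 0 v →
      ∃ a b, G.Adj 0 a ∧ G.Adj 0 b ∧ G.Adj v a ∧ G.Adj v b ∧ G.Adj a b) :
    G.CliqueSaturated 4 := by
  refine ⟨cliqueFree_four_iff.2 fun a b c d hab hac had hbc hbd hcd => ?_, fun u v huv hnadj => ?_⟩
  · rw [← hG.adj_sub_iff a] at hab hac had hbc hbd hcd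
    rw [sub_self] at hab hac had
    exact hfree _ _ _ hab hac had hbc hbd hcd
  · have hnadj₀ : ¬G.Adj 0 (v - u) := by rwa [← sub_self u, hG.adj_sub_iff]
    obtain ⟨a, b, hua, hub, hva, hvb, hab⟩ := hsat (v - u) (sub_ne_zero.2 huv.symm) hnadj₀
    have shift {x y} (h : G.Adj x y) : G.Adj (x + u) (y + u) := (hG u x y).2 h
    refine not_cliqueFree_four_sup_edge huv (a := a + u) (b := b + u) ?_ ?_ ?_ ?_ (shift hab)
    · simpa using shift hua
    · simpa using shift hub
    · simpa using shift hva
    · simpa using shift hvb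

end TranslationInvariant

end SimpleGraph

open SimpleGraph

theorem doublySaturated_iff {V : Type*} {G : SimpleGraph V} {s t : ℕ} :
    DoublySaturated s t G ↔ G.CliqueSaturated s ∧ Gᶜ.CliqueSaturated t ∧ G ≠ ⊤ ∧ Gᶜ ≠ ⊤ := by
  have hdel : (∀ u v, G.Adj u v → ¬(G.deleteEdges {s(u, v)})ᶜ.CliqueFree t) ↔
      ∀ u v, u ≠ v → ¬Gᶜ.Adj u v → ¬(Gᶜ ⊔ edge u v).CliqueFree t := by
    simp only [compl_adj, not_and, not_not]
    exact forall₂_congr fun u v => ⟨fun h huv hadj => compl_deleteEdges_edge u v ▸ h (hadj huv),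
      fun h hadj => compl_deleteEdges_edge u v ▸ h hadj.ne fun _ => hadj⟩
  simp only [DoublySaturated, RGood, CliqueSaturated, hdel]
  tauto

theorem translationInvariant_circ (n : ℕ) (S : Set ℕ) : (circ n S).TranslationInvariant := by
  intro c x y
  simp only [circ, fromRel_adj, add_sub_add_right_eq_sub, ne_eq, add_left_inj]

instance (n : ℕ) (S : Set ℕ) [DecidablePred (· ∈ S)] : DecidableRel (circ n S).Adj :=
  fun _ _ => inferInstanceAs (Decidable (_ ∧ _))

theorem compl_circ_thirteen : (circ 13 {1, 3, 4})ᶜ = circ 13 {2, 5, 6} := by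
  ext x y
  revert x y
  decide

theorem stmt_12 : DoublySaturated 4 4 (circ 13 {1, 3, 4}) := by
  rw [doublySaturated_iff, compl_circ_thirteen]
  exact ⟨(translationInvariant_circ 13 _).cliqueSaturated_four (by decide) (by decide),
    (translationInvariant_circ 13 _).cliqueSaturated_four (by decide) (by decide),
    ne_top_iff_exists_not_adj.2 (by decide), ne_top_iff_exists_not_adj.2 (by decide)⟩
end
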